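/- Given an operator U = {U_1,…,U_k} with U_i ∈ ℝ^{m×n}, there exists a nonnegative matrix A ∈ ℝ^{m×n} with cap(A) ≤ cap(U), Δ(A) ≤ Δ(U), and s(A) = s(U). Moreover, if ∑_i U_i U_i^T = p·I_m then all row sums of A equal p, and if ∑_i U_i^T U_i = q·I_n then all column sums of A equal q. -/

import Mathlib

open Matrix BigOperators

/-- Capacity of a nonnegative matrix. -/
noncomputable def matCap {ι κ : Type*} [Fintype ι] [Fintype κ] (A : Matrix ι κ ℝ) : ℝ :=
  sInf {c : ℝ | ∃ x : κ → ℝ, (∀ j, 0 < x j) ∧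
    c = (Fintype.card ι : ℝ) * (∏ i, A.mulVec x i) ^ ((1 : ℝ) / (Fintype.card ι : ℝ)) /
        (∏ j, x j) ^ ((1 : ℝ) / (Fintype.card κ : ℝ))}

/-- Size of a matrix: the sum of all entries. -/
noncomputable def matSize {ι κ : Type*} [Fintype ι] [Fintype κ] (A : Matrix ι κ ℝ) : ℝ :=
  ∑ i, ∑ j, A i j

/-- The measure Δ of distance to doubly balanced. -/
noncomputable def matDelta {ι κ : Type*} [Fintype ι] [Fintype κ] (A : Matrix ι κ ℝ) : ℝ :=
  (1 / (Fintype.card ι : ℝ)) * ∑ i, (matSize A - (Fintype.card ι : ℝ) * ∑ j, A i j) ^ 2 +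
  (1 / (Fintype.card κ : ℝ)) * ∑ j, (matSize A - (Fintype.card κ : ℝ) * ∑ i, A i j) ^ 2

/-- Capacity of an operator given by matrices U_1, ..., U_k. -/
noncomputable def opCap {k m n : ℕ} (U : Fin k → Matrix (Fin m) (Fin n) ℝ) : ℝ :=
  sInf {c : ℝ | ∃ X : Matrix (Fin n) (Fin n) ℝ, X.PosDef ∧
    c = (m : ℝ) * (∑ i, U i * X * (U i)ᵀ).det ^ ((1 : ℝ) / (m : ℝ)) /
        X.det ^ ((1 : ℝ) / (n : ℝ))}

/-- Size of an operator. -/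
noncomputable def opSize {k m n : ℕ} (U : Fin k → Matrix (Fin m) (Fin n) ℝ) : ℝ :=
  (∑ i, U i * (U i)ᵀ).trace

/-- The measure Δ of distance to doubly balanced for an operator. -/
noncomputable def opDelta {k m n : ℕ} (U : Fin k → Matrix (Fin m) (Fin n) ℝ) : ℝ :=
  (1 / (m : ℝ)) *
    ((opSize U • (1 : Matrix (Fin m) (Fin m) ℝ) - (m : ℝ) • ∑ i, U i * (U i)ᵀ) ^ 2).trace +
  (1 / (n : ℝ)) *
    ((opSize U • (1 : Matrix (Fin n) (Fin n) ℝ) - (n : ℝ) • ∑ i, (U i)ᵀ * U i) ^ 2).trace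

/-!
For `X ≻ 0` write `X = F diag(λ) Fᵀ` and `∑ₗ Uₗ X Uₗᵀ = G diag(μ) Gᵀ` with `F`, `G` orthogonal.
The nonnegative matrix `Aᵢⱼ = ∑ₗ (Gᵀ Uₗ F)ᵢⱼ²` satisfies `A λ = μ`, so its capacity objective
at `λ` is the operator objective at `X`. For any orthogonal `F`, `G` the row and column sums of
`A` are the diagonals of `Gᵀ (∑ Uₗ Uₗᵀ) G` and `Fᵀ (∑ Uₗᵀ Uₗ) F`; this gives the size, the
balanced cases, and `Δ(A) ≤ Δ(U)`, because the diagonal of a symmetric matrix carries at most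
its Frobenius norm. As `cap(U)` need not be attained, take near-minimizers, extract a convergent
subsequence of the pairs `(F, G)` in the compact orthogonal groups, and pass to the limit using
lower semicontinuity of the matrix capacity.
-/

open Filter Topology Finset

lemma mulVec_nonneg_of_nonneg {ι κ : Type*} [Fintype κ] {A : Matrix ι κ ℝ}
    (hA : ∀ i j, 0 ≤ A i j) {x : κ → ℝ} (hx : ∀ j, 0 ≤ x j) (i : ι) : 0 ≤ (A *ᵥ x) i :=
  sum_nonneg fun j _ => mul_nonneg (hA i j) (hx j)

section Capacity

variable {ι κ : Type*} [Fintype ι] [Fintype κ]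

noncomputable def capObjective (A : Matrix ι κ ℝ) (x : κ → ℝ) : ℝ :=
  (Fintype.card ι : ℝ) * (∏ i, (A *ᵥ x) i) ^ ((1 : ℝ) / (Fintype.card ι : ℝ)) /
    (∏ j, x j) ^ ((1 : ℝ) / (Fintype.card κ : ℝ))

lemma capObjective_nonneg {A : Matrix ι κ ℝ} (hA : ∀ i j, 0 ≤ A i j) {x : κ → ℝ}
    (hx : ∀ j, 0 ≤ x j) : 0 ≤ capObjective A x := by
  have := prod_nonneg fun i (_ : i ∈ univ) => mulVec_nonneg_of_nonneg hA hx i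
  have := prod_nonneg fun j (_ : j ∈ univ) => hx j
  unfold capObjective
  positivity

lemma capObjective_mono {A B : Matrix ι κ ℝ} (hA : ∀ i j, 0 ≤ A i j)
    (hAB : ∀ i j, A i j ≤ B i j) {x : κ → ℝ} (hx : ∀ j, 0 ≤ x j) :
    capObjective A x ≤ capObjective B x := by
  have hAx : ∀ i, (A *ᵥ x) i ≤ (B *ᵥ x) i := fun i =>
    sum_le_sum fun j _ => mul_le_mul_of_nonneg_right (hAB i j) (hx j)
  unfold capObjective
  gcongr with i
  · exact Real.rpow_nonneg (prod_nonneg fun j _ => hx j) _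
  · exact prod_nonneg fun i _ => mulVec_nonneg_of_nonneg hA hx i
  · exact fun i _ => mulVec_nonneg_of_nonneg hA hx i
  · exact hAx i

lemma capObjective_smul {c : ℝ} (hc : 0 ≤ c) {A : Matrix ι κ ℝ} (hA : ∀ i j, 0 ≤ A i j)
    {x : κ → ℝ} (hx : ∀ j, 0 ≤ x j) : capObjective (c • A) x = c * capObjective A x := by
  unfold capObjective
  rcases eq_or_ne (Fintype.card ι) 0 with hι | hι
  · simp [hι]
  have hroot : (c ^ Fintype.card ι) ^ ((1 : ℝ) / (Fintype.card ι : ℝ)) = c := by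
    rw [one_div, Real.pow_rpow_inv_natCast hc hι]
  simp only [smul_mulVec, Pi.smul_apply, smul_eq_mul, prod_mul_distrib, prod_const, card_univ]
  rw [Real.mul_rpow (pow_nonneg hc _) (prod_nonneg fun i _ => mulVec_nonneg_of_nonneg hA hx i),
    hroot]
  ring

lemma matCap_le_capObjective {A : Matrix ι κ ℝ} (hA : ∀ i j, 0 ≤ A i j) {x : κ → ℝ}
    (hx : ∀ j, 0 < x j) : matCap A ≤ capObjective A x := by
  refine csInf_le ⟨0, ?_⟩ ⟨x, hx, rfl⟩
  rintro c ⟨y, hy, rfl⟩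
  exact capObjective_nonneg hA fun j => (hy j).le

lemma le_matCap {A : Matrix ι κ ℝ} {c : ℝ}
    (h : ∀ x : κ → ℝ, (∀ j, 0 < x j) → c ≤ capObjective A x) : c ≤ matCap A := by
  refine le_csInf ⟨_, fun _ => 1, fun _ => one_pos, rfl⟩ ?_
  rintro _ ⟨x, hx, rfl⟩
  exact h x hx

lemma mul_matCap_le_matCap {A B : Matrix ι κ ℝ} (hA : ∀ i j, 0 ≤ A i j) {c : ℝ} (hc : 0 ≤ c)
    (hAB : ∀ i j, c * A i j ≤ B i j) : c * matCap A ≤ matCap B :=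
  le_matCap fun x hx => calc
    c * matCap A ≤ c * capObjective A x :=
      mul_le_mul_of_nonneg_left (matCap_le_capObjective hA hx) hc
    _ = capObjective (c • A) x := (capObjective_smul hc hA fun j => (hx j).le).symm
    _ ≤ capObjective B x :=
      capObjective_mono (fun i j => mul_nonneg hc (hA i j)) hAB fun j => (hx j).le

/-- Lower semicontinuity of the capacity: near a nonnegative `A`, any nonnegative matrix
dominates `c • A` for each fixed `c < 1`, so its capacity is at least `c * matCap A`. -/
lemma matCap_le_of_tendsto {α : Type*} {l : Filter α} [l.NeBot] {As : α → Matrix ι κ ℝ}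
    {A : Matrix ι κ ℝ} (hAs : ∀ s i j, 0 ≤ As s i j) (hlim : Tendsto As l (𝓝 A))
    {w : α → ℝ} {v : ℝ} (hw : Tendsto w l (𝓝 v)) (hcap : ∀ s, matCap (As s) ≤ w s) :
    matCap A ≤ v := by
  have hentry : ∀ i j, Tendsto (fun s => As s i j) l (𝓝 (A i j)) := fun i j =>
    ((continuous_id.matrix_elem i j).tendsto A).comp hlim
  have hA : ∀ i j, 0 ≤ A i j := fun i j =>
    ge_of_tendsto (hentry i j) (Eventually.of_forall fun s => hAs s i j)
  have hscaled : ∀ c ∈ Set.Ioo (0 : ℝ) 1, c * matCap A ≤ v := by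
    intro c hc
    have hdom : ∀ᶠ s in l, ∀ i j, c * A i j ≤ As s i j := by
      simp only [eventually_all]
      intro i j
      rcases (hA i j).eq_or_lt with h0 | hpos
      · exact Eventually.of_forall fun s => by rw [← h0, mul_zero]; exact hAs s i j
      · exact (hentry i j).eventually (eventually_ge_nhds (by nlinarith [hc.2]))
    refine ge_of_tendsto hw (hdom.mono fun s hs => ?_)
    exact (mul_matCap_le_matCap hA hc.1.le hs).trans (hcap s)
  have hlim_one : Tendsto (fun c : ℝ => c * matCap A) (𝓝[<] 1) (𝓝 (matCap A)) := by
    simpa using ((continuous_mul_const (matCap A)).tendsto 1).mono_left nhdsWithin_le_nhds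
  exact le_of_tendsto hlim_one
    (eventually_of_mem (Ioo_mem_nhdsLT zero_lt_one) hscaled)

end Capacity

instance {m n R : Type*} [Countable m] [Countable n] [TopologicalSpace R]
    [FirstCountableTopology R] : FirstCountableTopology (Matrix m n R) :=
  inferInstanceAs (FirstCountableTopology (m → n → R))

lemma isCompact_orthogonalGroup {n : Type*} [Fintype n] [DecidableEq n] :
    IsCompact (orthogonalGroup n ℝ : Set (Matrix n n ℝ)) := by
  refine (isCompact_Icc (a := (-1 : ℝ)) (b := 1)).matrix.of_isClosed_subset ?_
    fun A hA i j => abs_le.mp (entry_norm_bound_of_unitary hA i j)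
  have : IsClosed {A : Matrix n n ℝ | A * Aᵀ = 1} := isClosed_eq (by fun_prop) continuous_const
  convert this using 1
  ext A
  exact mem_orthogonalGroup_iff _ _

lemma Matrix.IsHermitian.eigenvectorUnitary_mul_diagonal_mul_transpose {n : Type*} [Fintype n]
    [DecidableEq n] {A : Matrix n n ℝ} (hA : A.IsHermitian) :
    (hA.eigenvectorUnitary : Matrix n n ℝ) * diagonal hA.eigenvalues *
      (hA.eigenvectorUnitary : Matrix n n ℝ)ᵀ = A := by
  conv_rhs => rw [hA.spectral_theorem]
  simp [Unitary.conjStarAlgAut_apply, star_eq_conjTranspose, RCLike.ofReal_real_eq_id]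

lemma Matrix.IsHermitian.transpose_eigenvectorUnitary_mul_mul {n : Type*} [Fintype n]
    [DecidableEq n] {A : Matrix n n ℝ} (hA : A.IsHermitian) :
    (hA.eigenvectorUnitary : Matrix n n ℝ)ᵀ * A * hA.eigenvectorUnitary =
      diagonal hA.eigenvalues := by
  have := hA.conjStarAlgAut_star_eigenvectorUnitary
  simpa [Unitary.conjStarAlgAut_apply, star_eq_conjTranspose, RCLike.ofReal_real_eq_id] using this

lemma sum_diag_sq_le_trace_sq {ι : Type*} [Fintype ι] [DecidableEq ι] {D : Matrix ι ι ℝ}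
    (hD : Dᵀ = D) : ∑ i, D i i ^ 2 ≤ (D ^ 2).trace := by
  have htrace : (D ^ 2).trace = ∑ i, ∑ j, D i j ^ 2 := by
    simp only [sq, trace, Matrix.diag, mul_apply]
    refine sum_congr rfl fun i _ => sum_congr rfl fun j _ => ?_
    rw [← transpose_apply D j i, hD]
  rw [htrace]
  exact sum_le_sum fun i _ =>
    single_le_sum (f := fun j => D i j ^ 2) (fun j _ => sq_nonneg _) (mem_univ i)

section Orthogonal

variable {ι : Type*} [Fintype ι] [DecidableEq ι] {G : Matrix ι ι ℝ}

lemma trace_transpose_mul_mul_of_mem_orthogonalGroup (hG : G ∈ orthogonalGroup ι ℝ)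
    (M : Matrix ι ι ℝ) : (Gᵀ * M * G).trace = M.trace := by
  rw [trace_mul_cycle, (mem_orthogonalGroup_iff _ _).mp hG, Matrix.one_mul]

lemma sum_sq_sub_mul_diag_conj_le (hG : G ∈ orthogonalGroup ι ℝ) {R : Matrix ι ι ℝ}
    (hR : Rᵀ = R) (t c : ℝ) :
    ∑ i, (t - c * (Gᵀ * R * G) i i) ^ 2 ≤ ((t • (1 : Matrix ι ι ℝ) - c • R) ^ 2).trace := by
  set C := t • (1 : Matrix ι ι ℝ) - c • R
  have hGG : G * Gᵀ = 1 := (mem_orthogonalGroup_iff _ _).mp hG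
  have hGG' : Gᵀ * G = 1 := (mem_orthogonalGroup_iff' _ _).mp hG
  have hdiag : ∀ i, (Gᵀ * C * G) i i = t - c * (Gᵀ * R * G) i i := fun i => by
    simp [C, Matrix.mul_sub, Matrix.sub_mul, hGG']
  have hsym : (Gᵀ * C * G)ᵀ = Gᵀ * C * G := by
    simp [C, transpose_mul, hR, Matrix.mul_assoc]
  have hsq : (Gᵀ * C * G) ^ 2 = Gᵀ * C ^ 2 * G := by
    simp only [sq, Matrix.mul_assoc, ← Matrix.mul_assoc G Gᵀ, hGG, Matrix.one_mul]
  calc ∑ i, (t - c * (Gᵀ * R * G) i i) ^ 2 = ∑ i, (Gᵀ * C * G) i i ^ 2 := by simp_rw [hdiag]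
    _ ≤ ((Gᵀ * C * G) ^ 2).trace := sum_diag_sq_le_trace_sq hsym
    _ = (C ^ 2).trace := by rw [hsq, trace_transpose_mul_mul_of_mem_orthogonalGroup hG]

end Orthogonal

section Reduction

variable {κ ι ι' : Type*} [Fintype κ] [Fintype ι] [Fintype ι']

/-- With orthonormal bases `fⱼ`, `gᵢ` as the columns of `F`, `G`, the entry is
`∑ₗ (gᵢᵀ Uₗ fⱼ)² = gᵢᵀ (∑ₗ Uₗ fⱼ fⱼᵀ Uₗᵀ) gᵢ`. -/
noncomputable def operatorReduction (U : κ → Matrix ι ι' ℝ) (F : Matrix ι' ι' ℝ)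
    (G : Matrix ι ι ℝ) : Matrix ι ι' ℝ :=
  of fun i j => ∑ l, ((Gᵀ * U l * F) i j) ^ 2

variable (U : κ → Matrix ι ι' ℝ) {F : Matrix ι' ι' ℝ} {G : Matrix ι ι ℝ}

lemma operatorReduction_nonneg (F : Matrix ι' ι' ℝ) (G : Matrix ι ι ℝ) (i : ι) (j : ι') :
    0 ≤ operatorReduction U F G i j :=
  sum_nonneg fun _ _ => sq_nonneg _

lemma continuous_operatorReduction :
    Continuous fun p : Matrix ι' ι' ℝ × Matrix ι ι ℝ => operatorReduction U p.1 p.2 := by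
  unfold operatorReduction
  fun_prop

lemma transpose_operatorReduction (F : Matrix ι' ι' ℝ) (G : Matrix ι ι ℝ) :
    (operatorReduction U F G)ᵀ = operatorReduction (fun l => (U l)ᵀ) G F := by
  have hV : ∀ l, Fᵀ * (U l)ᵀ * G = (Gᵀ * U l * F)ᵀ := fun l => by
    simp [transpose_mul, Matrix.mul_assoc]
  ext j i
  simp only [operatorReduction, transpose_apply, of_apply, hV]

lemma mulVec_operatorReduction_apply [DecidableEq ι'] (F : Matrix ι' ι' ℝ) (G : Matrix ι ι ℝ)
    (w : ι' → ℝ) (i : ι) : (operatorReduction U F G *ᵥ w) i =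
      (Gᵀ * (∑ l, U l * (F * diagonal w * Fᵀ) * (U l)ᵀ) * G) i i := by
  have hV : ∀ l, Gᵀ * (U l * (F * diagonal w * Fᵀ) * (U l)ᵀ) * G =
      (Gᵀ * U l * F) * diagonal w * (Gᵀ * U l * F)ᵀ := fun l => by
    simp [transpose_mul, Matrix.mul_assoc]
  have hdiag : ∀ V : Matrix ι ι' ℝ, (V * diagonal w * Vᵀ) i i = ∑ j, V i j ^ 2 * w j :=
    fun V => by
      rw [mul_apply]
      exact sum_congr rfl fun j _ => by rw [mul_diagonal, transpose_apply]; ring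
  rw [Matrix.mul_sum, Matrix.sum_mul, Matrix.sum_apply]
  simp only [hV, hdiag, mulVec, dotProduct, operatorReduction, of_apply, sum_mul]
  exact sum_comm

lemma sum_operatorReduction_row [DecidableEq ι'] (hF : F ∈ orthogonalGroup ι' ℝ) (i : ι) :
    ∑ j, operatorReduction U F G i j = (Gᵀ * (∑ l, U l * (U l)ᵀ) * G) i i := by
  simpa [diagonal_one, (mem_orthogonalGroup_iff _ _).mp hF, mulVec, dotProduct] using
    mulVec_operatorReduction_apply U F G (fun _ => 1) i

lemma sum_operatorReduction_col [DecidableEq ι] (hG : G ∈ orthogonalGroup ι ℝ) (j : ι') :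
    ∑ i, operatorReduction U F G i j = (Fᵀ * (∑ l, (U l)ᵀ * U l) * F) j j := by
  simpa [← transpose_operatorReduction] using
    sum_operatorReduction_row (fun l => (U l)ᵀ) (F := G) (G := F) hG j

lemma sum_operatorReduction_row_eq [DecidableEq ι] [DecidableEq ι']
    (hF : F ∈ orthogonalGroup ι' ℝ) (hG : G ∈ orthogonalGroup ι ℝ) {p : ℝ}
    (hp : ∑ l, U l * (U l)ᵀ = p • 1) (i : ι) : ∑ j, operatorReduction U F G i j = p := by
  simp [sum_operatorReduction_row U hF, hp, (mem_orthogonalGroup_iff' _ _).mp hG]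

lemma sum_operatorReduction_col_eq [DecidableEq ι] [DecidableEq ι']
    (hF : F ∈ orthogonalGroup ι' ℝ) (hG : G ∈ orthogonalGroup ι ℝ) {q : ℝ}
    (hq : ∑ l, (U l)ᵀ * U l = q • 1) (j : ι') : ∑ i, operatorReduction U F G i j = q := by
  simp [sum_operatorReduction_col U hG, hq, (mem_orthogonalGroup_iff' _ _).mp hF]

lemma matSize_operatorReduction [DecidableEq ι] [DecidableEq ι']
    (hF : F ∈ orthogonalGroup ι' ℝ) (hG : G ∈ orthogonalGroup ι ℝ) :
    matSize (operatorReduction U F G) = (∑ l, U l * (U l)ᵀ).trace := by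
  simp only [matSize, sum_operatorReduction_row U hF]
  exact trace_transpose_mul_mul_of_mem_orthogonalGroup hG _

lemma exists_matCap_operatorReduction_le [DecidableEq ι] [DecidableEq ι']
    {X : Matrix ι' ι' ℝ} (hX : X.PosDef) :
    ∃ F ∈ orthogonalGroup ι' ℝ, ∃ G ∈ orthogonalGroup ι ℝ,
      matCap (operatorReduction U F G) ≤
        (Fintype.card ι : ℝ) * (∑ l, U l * X * (U l)ᵀ).det ^ ((1 : ℝ) / Fintype.card ι) /
          X.det ^ ((1 : ℝ) / Fintype.card ι') := by
  set B := ∑ l, U l * X * (U l)ᵀ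
  have hXt : Xᵀ = X := by rw [← conjTranspose_eq_transpose_of_trivial]; exact hX.1
  have hB : B.IsHermitian := by
    simp only [IsHermitian, conjTranspose_eq_transpose_of_trivial, B, transpose_sum,
      transpose_mul, transpose_transpose, Matrix.mul_assoc, hXt]
  set F := hX.1.eigenvectorUnitary
  set G := hB.eigenvectorUnitary
  have hmulVec : operatorReduction U F G *ᵥ hX.1.eigenvalues = hB.eigenvalues := by
    ext i
    rw [mulVec_operatorReduction_apply, hX.1.eigenvectorUnitary_mul_diagonal_mul_transpose,
      hB.transpose_eigenvectorUnitary_mul_mul, diagonal_apply_eq]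
  refine ⟨F, F.2, G, G.2, ?_⟩
  calc matCap (operatorReduction U F G)
      ≤ capObjective (operatorReduction U F G) hX.1.eigenvalues :=
        matCap_le_capObjective (operatorReduction_nonneg U F G) hX.eigenvalues_pos
    _ = _ := by
        rw [capObjective, hmulVec, hB.det_eq_prod_eigenvalues, hX.1.det_eq_prod_eigenvalues]
        simp

end Reduction

section Operator

variable {k m n : ℕ} (U : Fin k → Matrix (Fin m) (Fin n) ℝ)

lemma matDelta_operatorReduction_le {F : Matrix (Fin n) (Fin n) ℝ}
    {G : Matrix (Fin m) (Fin m) ℝ} (hF : F ∈ orthogonalGroup (Fin n) ℝ)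
    (hG : G ∈ orthogonalGroup (Fin m) ℝ) :
    matDelta (operatorReduction U F G) ≤ opDelta U := by
  have hsize : matSize (operatorReduction U F G) = opSize U := matSize_operatorReduction U hF hG
  simp only [matDelta, opDelta, Fintype.card_fin, hsize, sum_operatorReduction_row U hF,
    sum_operatorReduction_col U hG]
  gcongr
  · exact sum_sq_sub_mul_diag_conj_le hG (by simp [transpose_sum, transpose_mul]) _ _
  · exact sum_sq_sub_mul_diag_conj_le hF (by simp [transpose_sum, transpose_mul]) _ _

lemma exists_matCap_operatorReduction_le_opCap :
    ∃ F ∈ orthogonalGroup (Fin n) ℝ, ∃ G ∈ orthogonalGroup (Fin m) ℝ,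
      matCap (operatorReduction U F G) ≤ opCap U := by
  have happrox : ∀ s : ℕ, ∃ p ∈ (orthogonalGroup (Fin n) ℝ : Set _) ×ˢ
      (orthogonalGroup (Fin m) ℝ : Set _),
      matCap (operatorReduction U p.1 p.2) ≤ opCap U + 1 / ((s : ℝ) + 1) := by
    intro s
    obtain ⟨_, ⟨X, hX, rfl⟩, hlt⟩ : ∃ c ∈ _, c < opCap U + 1 / ((s : ℝ) + 1) :=
      Real.lt_sInf_add_pos (by exact ⟨_, 1, PosDef.one, rfl⟩) Nat.one_div_pos_of_nat
    obtain ⟨F, hF, G, hG, hcap⟩ := exists_matCap_operatorReduction_le U hX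
    simp only [Fintype.card_fin] at hcap
    exact ⟨(F, G), ⟨hF, hG⟩, hcap.trans hlt.le⟩
  choose p hp hcap using happrox
  obtain ⟨⟨F, G⟩, ⟨hF, hG⟩, φ, hφ, hlim⟩ :=
    (isCompact_orthogonalGroup.prod isCompact_orthogonalGroup).tendsto_subseq hp
  refine ⟨F, hF, G, hG, matCap_le_of_tendsto (fun s => operatorReduction_nonneg U _ _)
    (((continuous_operatorReduction U).tendsto _).comp hlim) ?_ fun s => hcap (φ s)⟩
  simpa using (tendsto_one_div_add_atTop_nhds_zero_nat.comp hφ.tendsto_atTop).const_add (opCap U)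

end Operator

theorem exists_matrix_reduction_general {k m n : ℕ}
    (U : Fin k → Matrix (Fin m) (Fin n) ℝ) :
    ∃ A : Matrix (Fin m) (Fin n) ℝ,
      (∀ i j, 0 ≤ A i j) ∧
      matCap A ≤ opCap U ∧
      matDelta A ≤ opDelta U ∧
      matSize A = opSize U ∧
      (∀ p : ℝ, 0 ≤ p → (∑ i, U i * (U i)ᵀ) = p • (1 : Matrix (Fin m) (Fin m) ℝ) →
          ∀ i, ∑ j, A i j = p) ∧
      (∀ q : ℝ, 0 ≤ q → (∑ i, (U i)ᵀ * U i) = q • (1 : Matrix (Fin n) (Fin n) ℝ) →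
          ∀ j, ∑ i, A i j = q) := by
  obtain ⟨F, hF, G, hG, hcap⟩ := exists_matCap_operatorReduction_le_opCap U
  exact ⟨operatorReduction U F G, operatorReduction_nonneg U F G, hcap,
    matDelta_operatorReduction_le U hF hG, matSize_operatorReduction U hF hG,
    fun _ _ hp => sum_operatorReduction_row_eq U hF hG hp,
    fun _ _ hq => sum_operatorReduction_col_eq U hF hG hq⟩

/-- Reduction from operator capacity to matrix capacity: given an operator `U`, there is a
nonnegative matrix `A` with `cap(A) ≤ cap(U)`, `Δ(A) ≤ Δ(U)` and `s(A) = s(U)`; moreover if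
`∑ᵢ Uᵢ Uᵢᵀ = p Iₘ` then all row sums of `A` equal `p`, and if `∑ᵢ Uᵢᵀ Uᵢ = q Iₙ` then all
column sums of `A` equal `q`. -/
theorem exists_matrix_reduction {k m n : ℕ} (hm : 0 < m) (hn : 0 < n)
    (U : Fin k → Matrix (Fin m) (Fin n) ℝ) :
    ∃ A : Matrix (Fin m) (Fin n) ℝ,
      (∀ i j, 0 ≤ A i j) ∧
      matCap A ≤ opCap U ∧
      matDelta A ≤ opDelta U ∧
      matSize A = opSize U ∧
      (∀ p : ℝ, 0 ≤ p → (∑ i, U i * (U i)ᵀ) = p • (1 : Matrix (Fin m) (Fin m) ℝ) →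
          ∀ i, ∑ j, A i j = p) ∧
      (∀ q : ℝ, 0 ≤ q → (∑ i, (U i)ᵀ * U i) = q • (1 : Matrix (Fin n) (Fin n) ℝ) →
          ∀ j, ∑ i, A i j = q) :=
  exists_matrix_reduction_general U
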